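/- arXiv:2004.08966 — 3 statements merged into one kernel-verified Lean document; each statement's English description precedes it below -/
import Mathlib

section
/- Let Z and V be real random variables on a probability space, with Z^+ and V^- integrable, and α > 0. Define h(x) = E[1(Z > x) e^{-α(V - x)^+}]. Then ∫_{-∞}^{∞} h(x) dx = E[(Z - V)^+ + e^{-α(V - Z)^+}/α]. -/
open MeasureTheory Real Set

/-! For fixed `ω`, integrating `x ↦ e^{-α(v-x)^+}` over `(-∞, z)` gives
`(z - v)^+ + e^{-α(v-z)^+}/α`: below `min z v` the integrand is `e^{α(x-v)}`, and on `[v, z]` it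
is `1`. As the integrand is nonnegative, Tonelli identifies both sides with the same lower
Lebesgue integral over `ℝ × Ω`, so they agree as real numbers whether or not it is finite. -/

section Tonelli

variable {α β : Type*} [MeasurableSpace α] [MeasurableSpace β] {μ : Measure α} {ν : Measure β}

theorem integral_integral_eq_toReal_lintegral_lintegral [SFinite ν] {f : α → β → ℝ}
    (hf : AEStronglyMeasurable (Function.uncurry f) (μ.prod ν)) (hf_nonneg : ∀ x y, 0 ≤ f x y)
    (hf_int : ∀ x, Integrable (f x) ν) :
    ∫ x, ∫ y, f x y ∂ν ∂μ = (∫⁻ x, ∫⁻ y, ENNReal.ofReal (f x y) ∂ν ∂μ).toReal := by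
  rw [integral_eq_lintegral_of_nonneg_ae
    (ae_of_all _ fun x => integral_nonneg (hf_nonneg x)) hf.integral_prod_right']
  congr 1
  refine lintegral_congr fun x => ?_
  exact ofReal_integral_eq_lintegral_ofReal (hf_int x) (ae_of_all _ (hf_nonneg x))

theorem integral_integral_swap_of_nonneg [SFinite μ] [SFinite ν] {f : α → β → ℝ}
    (hf : AEStronglyMeasurable (Function.uncurry f) (μ.prod ν)) (hf_nonneg : ∀ x y, 0 ≤ f x y)
    (hf_int_right : ∀ x, Integrable (f x) ν) (hf_int_left : ∀ y, Integrable (f · y) μ) :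
    ∫ x, ∫ y, f x y ∂ν ∂μ = ∫ y, ∫ x, f x y ∂μ ∂ν := by
  rw [integral_integral_eq_toReal_lintegral_lintegral hf hf_nonneg hf_int_right,
    integral_integral_eq_toReal_lintegral_lintegral hf.prod_swap (fun y x => hf_nonneg x y)
      hf_int_left,
    lintegral_lintegral_swap hf.aemeasurable.ennreal_ofReal]

end Tonelli

section ExpPosPart

variable {a : ℝ}

theorem exp_neg_mul_max_le_one (ha : 0 ≤ a) (t : ℝ) : exp (-a * max t 0) ≤ 1 :=
  exp_le_one_iff.mpr (by nlinarith [le_max_right t 0])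

theorem integrableOn_exp_neg_mul_max_sub_Iic (ha : 0 < a) (v z : ℝ) :
    IntegrableOn (fun x => exp (-a * max (v - x) 0)) (Iic z) := by
  refine ((integrableOn_exp_mul_Iic ha z).const_mul (exp (-a * v))).mono' (by fun_prop) ?_
  refine ae_of_all _ fun x => ?_
  rw [norm_of_nonneg (exp_pos _).le, ← exp_add]
  exact exp_le_exp.mpr (by nlinarith [le_max_left (v - x) 0])

theorem integral_exp_neg_mul_max_sub_Iic_of_le (ha : 0 < a) {v z : ℝ} (hzv : z ≤ v) :
    ∫ x in Iic z, exp (-a * max (v - x) 0) = exp (a * (z - v)) / a := by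
  have h_eq : EqOn (fun x => exp (-a * max (v - x) 0)) (fun x => exp (-a * v) * exp (a * x))
      (Iic z) := fun x (hx : x ≤ z) => by
    dsimp only
    rw [max_eq_left (by linarith), ← exp_add]
    ring_nf
  rw [setIntegral_congr_fun measurableSet_Iic h_eq, integral_const_mul,
    integral_exp_mul_Iic ha, ← mul_div_assoc, ← exp_add]
  ring_nf

theorem integral_exp_neg_mul_max_sub_Iic (ha : 0 < a) (v z : ℝ) :
    ∫ x in Iic z, exp (-a * max (v - x) 0) = max (z - v) 0 + exp (-a * max (v - z) 0) / a := by
  rcases le_total z v with hzv | hvz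
  · rw [integral_exp_neg_mul_max_sub_Iic_of_le ha hzv, max_eq_right (by linarith),
      max_eq_left (by linarith)]
    ring_nf
  · have h_one : EqOn (fun x => exp (-a * max (v - x) 0)) 1 (uIcc v z) := fun x hx => by
      rw [uIcc_of_le hvz] at hx
      simp [max_eq_right (by linarith [hx.1] : v - x ≤ 0)]
    have h_split := intervalIntegral.integral_Iic_sub_Iic
      (integrableOn_exp_neg_mul_max_sub_Iic ha v v) (integrableOn_exp_neg_mul_max_sub_Iic ha v z)
    rw [intervalIntegral.integral_congr h_one, integral_exp_neg_mul_max_sub_Iic_of_le ha le_rfl]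
      at h_split
    rw [max_eq_left (by linarith), max_eq_right (by linarith), mul_zero, exp_zero]
    simp only [sub_self, mul_zero, exp_zero, Pi.one_apply, intervalIntegral.integral_const,
      smul_eq_mul, mul_one] at h_split
    linarith

end ExpPosPart

theorem stmt3_general {Ω : Type*} [MeasurableSpace Ω] (μ : Measure Ω) [IsProbabilityMeasure μ]
    (Z V : Ω → ℝ) (hZ : Measurable Z) (hV : Measurable V) (α : ℝ) (hα : 0 < α) :
    ∫ x : ℝ, ∫ ω, Set.indicator {ω | x < Z ω}
        (fun ω => Real.exp (-α * max (V ω - x) 0)) ω ∂μ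
      = ∫ ω, (max (Z ω - V ω) 0 + Real.exp (-α * max (V ω - Z ω) 0) / α) ∂μ := by
  set f : ℝ → Ω → ℝ := fun x ω => {ω | x < Z ω}.indicator (fun ω => exp (-α * max (V ω - x) 0)) ω
  have hf_Iio : ∀ x ω, f x ω = (Iio (Z ω)).indicator (fun x => exp (-α * max (V ω - x) 0)) x :=
    fun _ _ => rfl
  have hf_meas : Measurable (Function.uncurry f) :=
    Measurable.indicator (by fun_prop) (measurableSet_lt measurable_fst (hZ.comp measurable_snd))
  have hf_nonneg : ∀ x ω, 0 ≤ f x ω := fun x ω => indicator_nonneg (fun _ _ => (exp_pos _).le) ω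
  have hf_int_ω : ∀ x, Integrable (f x) μ := fun x =>
    Integrable.of_bound (hf_meas.comp measurable_prodMk_left).aestronglyMeasurable 1
      (ae_of_all _ fun ω => (norm_of_nonneg (hf_nonneg x ω)).trans_le <|
        indicator_apply_le' (fun _ => exp_neg_mul_max_le_one hα.le _) (fun _ => zero_le_one))
  have hf_int_x : ∀ ω, Integrable (f · ω) := fun ω => by
    simp_rw [hf_Iio]
    exact (integrable_indicator_iff measurableSet_Iio).mpr
      ((integrableOn_exp_neg_mul_max_sub_Iic hα (V ω) (Z ω)).mono_set Iio_subset_Iic_self)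
  have h_inner : ∀ ω, ∫ x, f x ω = max (Z ω - V ω) 0 + exp (-α * max (V ω - Z ω) 0) / α :=
    fun ω => by
      simp_rw [hf_Iio, integral_indicator measurableSet_Iio, ← integral_Iic_eq_integral_Iio]
      exact integral_exp_neg_mul_max_sub_Iic hα (V ω) (Z ω)
  rw [integral_integral_swap_of_nonneg hf_meas.aestronglyMeasurable hf_nonneg hf_int_ω hf_int_x]
  exact integral_congr_ae (ae_of_all _ h_inner)

/-- For `h(x) = E[1(Z > x) e^{-α(V-x)^+}]`,
`∫_{-∞}^∞ h(x) dx = E[(Z - V)^+ + e^{-α(V-Z)^+}/α]`. -/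
theorem stmt3 {Ω : Type*} [MeasurableSpace Ω] (μ : Measure Ω) [IsProbabilityMeasure μ]
    (Z V : Ω → ℝ) (hZ : Measurable Z) (hV : Measurable V) (α : ℝ) (hα : 0 < α)
    (hZp : Integrable (fun ω => max (Z ω) 0) μ)
    (hVm : Integrable (fun ω => max (-V ω) 0) μ) :
    ∫ x : ℝ, ∫ ω, Set.indicator {ω | x < Z ω}
        (fun ω => Real.exp (-α * max (V ω - x) 0)) ω ∂μ
      = ∫ ω, (max (Z ω - V ω) 0 + Real.exp (-α * max (V ω - Z ω) 0) / α) ∂μ :=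
  stmt3_general μ Z V hZ hV α hα
end

section
/- Let N ≡ 2, C_1 = C_2 = 1/2, Q ≡ 1/2, and let T have a Frechet(1, s) distribution: P(T ≤ x) = e^{-s/x} for x > 0. Then R' := (T ∨ 1)/2 satisfies the distributional fixed point equation R' =_D Q ∨ ⋁_{i=1}^N C_i R_i', where R_1', R_2' are i.i.d. copies of R' independent of everything else. That is, (1/2) ∨ ((T_1 ∨ 1)/4) ∨ ((T_2 ∨ 1)/4) has the same distribution as (1 ∨ T)/2 when T_1, T_2 are i.i.d. Frechet(1, s). -/
open MeasureTheory ProbabilityTheory Real Filter Set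

/-- With `N ≡ 2`, `C_1 = C_2 = 1/2`, `Q ≡ 1/2`, and `T, T_1, T_2` i.i.d.
Frechet(1,s), the random variable `R' = (T ∨ 1)/2` satisfies the fixed-point
equation: `(1/2) ∨ ((T_1 ∨ 1)/4) ∨ ((T_2 ∨ 1)/4)` has the same distribution as
`(1 ∨ T)/2`. -/
theorem stmt9 {Ω : Type*} [MeasurableSpace Ω] (μ : Measure Ω) [IsProbabilityMeasure μ]
    (T T1 T2 : Ω → ℝ) (hT : Measurable T) (hT1 : Measurable T1) (hT2 : Measurable T2)
    (s : ℝ) (hs : 0 < s)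
    (hTlaw : ∀ x : ℝ, μ {ω | T ω ≤ x}
      = if 0 < x then ENNReal.ofReal (Real.exp (-s / x)) else 0)
    (hT1law : ∀ x : ℝ, μ {ω | T1 ω ≤ x}
      = if 0 < x then ENNReal.ofReal (Real.exp (-s / x)) else 0)
    (hT2law : ∀ x : ℝ, μ {ω | T2 ω ≤ x}
      = if 0 < x then ENNReal.ofReal (Real.exp (-s / x)) else 0)
    (hindep : IndepFun T1 T2 μ) :
    ∀ x : ℝ,
      μ {ω | max (1 / 2) (max (max (T1 ω) 1 / 4) (max (T2 ω) 1 / 4)) ≤ x}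
        = μ {ω | max 1 (T ω) / 2 ≤ x} := by
  intro x
  by_cases hx : (1:ℝ)/2 ≤ x
  · have hx0 : (0:ℝ) < x := lt_of_lt_of_le (by norm_num) hx
    have h14 : {ω | max (1 / 2) (max (max (T1 ω) 1 / 4) (max (T2 ω) 1 / 4)) ≤ x}
        = T1 ⁻¹' Set.Iic (4*x) ∩ T2 ⁻¹' Set.Iic (4*x) := by
      ext ω
      simp only [Set.mem_setOf_eq, Set.mem_inter_iff, Set.mem_preimage, Set.mem_Iic,
        max_le_iff, div_le_iff₀ (by norm_num : (0:ℝ) < 4)]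
      constructor
      · rintro ⟨-, ⟨h1, -⟩, ⟨h2, -⟩⟩
        exact ⟨by linarith, by linarith⟩
      · rintro ⟨h1, h2⟩
        exact ⟨hx, ⟨by linarith, by linarith⟩, ⟨by linarith, by linarith⟩⟩
    have h2x : {ω | max 1 (T ω) / 2 ≤ x} = {ω | T ω ≤ 2*x} := by
      ext ω
      simp only [Set.mem_setOf_eq, div_le_iff₀ (by norm_num : (0:ℝ) < 2), max_le_iff]
      constructor
      · rintro ⟨-, h⟩; linarith
      · intro h; exact ⟨by linarith, by linarith⟩
    rw [h14, h2x,
      hindep.measure_inter_preimage_eq_mul _ _ measurableSet_Iic measurableSet_Iic]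
    have e1 : T1 ⁻¹' Set.Iic (4*x) = {ω | T1 ω ≤ 4*x} := rfl
    have e2 : T2 ⁻¹' Set.Iic (4*x) = {ω | T2 ω ≤ 4*x} := rfl
    rw [e1, e2, hT1law, hT2law, hTlaw,
      if_pos (by linarith : (0:ℝ) < 4*x), if_pos (by linarith : (0:ℝ) < 2*x),
      ← ENNReal.ofReal_mul (le_of_lt (Real.exp_pos _)), ← Real.exp_add]
    congr 2
    field_simp
    ring
  · have h1 : {ω | max (1 / 2) (max (max (T1 ω) 1 / 4) (max (T2 ω) 1 / 4)) ≤ x} = ∅ := by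
      ext ω
      simp only [Set.mem_setOf_eq, Set.mem_empty_iff_false, iff_false]
      intro h
      exact hx (le_trans (le_max_left _ _) h)
    have h2 : {ω | max 1 (T ω) / 2 ≤ x} = ∅ := by
      ext ω
      simp only [Set.mem_setOf_eq, Set.mem_empty_iff_false, iff_false]
      intro h
      have : (1:ℝ)/2 ≤ max 1 (T ω) / 2 := by
        have := le_max_left 1 (T ω); linarith
      exact hx (le_trans this h)
    rw [h1, h2]
end

section
/- Let (X_i)_{i≥1} be i.i.d. real random variables with mean μ > 0, V_n = X_1 + ... + X_n, and (ξ_n)_{n≥0} an identically distributed sequence with E[ξ_0^+] < ∞ and P(ξ_0 > -∞) > 0 with the ξ_n independent across n (or at least such that P(2ξ_0 < -εn)^{(ε/2)n - 1} is summable). Define τ(t) = inf{k ≥ 0 : V_k + ξ_k > t}. Then τ(t)/t → 1/μ almost surely as t → ∞. -/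
/-!
By the strong law `V_k ≈ μ k`, and `ξ_k⁺ = o(k)` by Borel–Cantelli since `E ξ₀⁺ < ∞`; so
`V_k + ξ_k ≤ (μ + ε) k + C` for all `k`, which bounds `τ(t)` from below by about `t / (μ + ε)`.
For the upper bound fix `c` with `P(ξ₀ < c) < 1`. By independence, the probability that `ξ_k < c`
throughout the window `[n, (1 + δ) n]` decays geometrically in `n`, so by Borel–Cantelli every such
window eventually contains some `k` with `ξ_k ≥ c`, and there `V_k + ξ_k ≥ (μ - ε) n + c`.
-/

open MeasureTheory ProbabilityTheory Real Filter Set Topology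
open scoped NNReal ENNReal

-- `sInf ∅ = 0`: the passage time is `0` when `f` never exceeds `t`.
noncomputable def firstPassage (f : ℕ → ℝ) (t : ℝ) : ℕ := sInf {k | t < f k}

lemma firstPassage_le {f : ℕ → ℝ} {t : ℝ} {k : ℕ} (h : t < f k) : firstPassage f t ≤ k :=
  Nat.sInf_le h

lemma lt_apply_firstPassage {f : ℕ → ℝ} {t : ℝ} (h : ∃ k, t < f k) :
    t < f (firstPassage f t) :=
  Nat.sInf_mem h

lemma eventually_mul_add_lt {p a : ℝ} (h : p < a) (q : ℝ) :
    ∀ᶠ t in atTop, p * t + q < a * t := by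
  filter_upwards [(tendsto_id.const_mul_atTop (sub_pos.2 h)).eventually_gt_atTop q] with t ht
  simp only [id] at ht
  linarith

lemma eventually_le_mul_of_tendsto_div {S : ℕ → ℝ} {m M : ℝ}
    (hS : Tendsto (fun n : ℕ => S n / n) atTop (𝓝 m)) (h : m < M) :
    ∀ᶠ n : ℕ in atTop, S n ≤ M * n := by
  filter_upwards [hS.eventually_lt_const h, eventually_gt_atTop 0] with n hn hn0
  rw [div_lt_iff₀ (by exact_mod_cast hn0)] at hn
  exact hn.le

lemma eventually_mul_le_of_tendsto_div {S : ℕ → ℝ} {m M : ℝ}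
    (hS : Tendsto (fun n : ℕ => S n / n) atTop (𝓝 m)) (h : M < m) :
    ∀ᶠ n : ℕ in atTop, M * n ≤ S n := by
  filter_upwards [hS.eventually_const_lt h, eventually_gt_atTop 0] with n hn hn0
  rw [lt_div_iff₀ (by exact_mod_cast hn0)] at hn
  exact hn.le

lemma exists_forall_le_add_of_eventually_le {f g : ℕ → ℝ} (h : ∀ᶠ n in atTop, f n ≤ g n) :
    ∃ C, ∀ n, f n ≤ g n + C := by
  have hbdd : IsBoundedUnder (· ≤ ·) cofinite (fun n => f n - g n) := by
    rw [Nat.cofinite_eq_atTop]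
    exact isBoundedUnder_of_eventually_le (h.mono fun n hn => sub_nonpos.2 hn)
  obtain ⟨C, hC⟩ := hbdd.bddAbove_range_of_cofinite
  exact ⟨C, fun n => by linarith [hC (mem_range_self n)]⟩

lemma eventually_lt_firstPassage_div {f : ℕ → ℝ} {M a : ℝ} (hM : 0 < M) (ha : a < 1 / M)
    (hfM : ∀ᶠ k in atTop, f k ≤ M * k) (hf : ∀ᶠ t in atTop, ∃ k, t < f k) :
    ∀ᶠ t in atTop, a < firstPassage f t / t := by
  obtain ⟨C, hC⟩ := exists_forall_le_add_of_eventually_le hfM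
  filter_upwards [hf, eventually_mul_add_lt ha (C / M), eventually_gt_atTop 0] with t hft hat ht
  have hτ : t < M * firstPassage f t + C := (lt_apply_firstPassage hft).trans_le (hC _)
  have hτ' : 1 / M * t < firstPassage f t + C / M := by
    rw [one_div_mul_eq_div, div_lt_iff₀ hM]
    calc t < M * firstPassage f t + C := hτ
      _ = (firstPassage f t + C / M) * M := by field_simp
  rw [lt_div_iff₀ ht]
  linarith

lemma eventually_exists_lt_apply_le {f : ℕ → ℝ} {M b c : ℝ} (hM : 0 < M) (hb : 0 ≤ b)
    (hwin : ∀ᶠ n : ℕ in atTop, ∃ k : ℕ, (k : ℝ) ≤ b * n ∧ M * n + c ≤ f k) :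
    ∀ᶠ t in atTop, ∃ k : ℕ, t < f k ∧ (k : ℝ) ≤ b / M * t + b * (2 - c / M) := by
  obtain ⟨N, hN⟩ := eventually_atTop.1 hwin
  filter_upwards [eventually_ge_atTop (c + M * N)] with t ht
  have hx : (N : ℝ) ≤ (t - c) / M := by rw [le_div_iff₀ hM]; linarith
  set n := ⌈(t - c) / M⌉₊ + 1
  have hn_lo : (t - c) / M + 1 ≤ n := by
    simp only [n, Nat.cast_add, Nat.cast_one]
    linarith [Nat.le_ceil ((t - c) / M)]
  have hn_hi : (n : ℝ) ≤ (t - c) / M + 2 := by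
    simp only [n, Nat.cast_add, Nat.cast_one]
    linarith [Nat.ceil_lt_add_one ((Nat.cast_nonneg N).trans hx)]
  obtain ⟨k, hkb, hkf⟩ := hN n (Nat.cast_le.1 (hx.trans (by linarith)))
  refine ⟨k, ?_, ?_⟩
  · have : t - c < M * n := by
      rw [← div_lt_iff₀' hM]
      linarith
    linarith
  · calc (k : ℝ) ≤ b * n := hkb
      _ ≤ b * ((t - c) / M + 2) := mul_le_mul_of_nonneg_left hn_hi hb
      _ = b / M * t + b * (2 - c / M) := by ring

lemma eventually_firstPassage_div_lt {f : ℕ → ℝ} {M b c a : ℝ} (hM : 0 < M) (hb : 0 ≤ b)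
    (ha : b / M < a) (hwin : ∀ᶠ n : ℕ in atTop, ∃ k : ℕ, (k : ℝ) ≤ b * n ∧ M * n + c ≤ f k) :
    ∀ᶠ t in atTop, firstPassage f t / t < a := by
  filter_upwards [eventually_exists_lt_apply_le hM hb hwin,
    eventually_mul_add_lt ha (b * (2 - c / M)), eventually_gt_atTop 0] with t ⟨k, hk, hkt⟩ hat ht
  have hτk : (firstPassage f t : ℝ) ≤ k := by exact_mod_cast firstPassage_le hk
  rw [div_lt_iff₀ ht]
  linarith

theorem tendsto_firstPassage_div {S Z : ℕ → ℝ} {m c : ℝ} (hm : 0 < m)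
    (hS : Tendsto (fun n : ℕ => S n / n) atTop (𝓝 m))
    (hZ : ∀ e > 0, ∀ᶠ n : ℕ in atTop, Z n ≤ e * n)
    (hwin : ∀ δ > 0, ∀ᶠ n : ℕ in atTop, ∃ k : ℕ, n ≤ k ∧ (k : ℝ) ≤ (1 + δ) * n ∧ c ≤ Z k) :
    Tendsto (fun t => (firstPassage (fun k => S k + Z k) t : ℝ) / t) atTop (𝓝 (1 / m)) := by
  have hreach : ∀ M, 0 < M → M < m → ∀ b > 1, ∀ᶠ n : ℕ in atTop,
      ∃ k : ℕ, (k : ℝ) ≤ b * n ∧ M * n + c ≤ S k + Z k := by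
    intro M hM hMm b hb
    obtain ⟨N, hN⟩ := eventually_atTop.1 (eventually_mul_le_of_tendsto_div hS hMm)
    filter_upwards [hwin (b - 1) (sub_pos.2 hb), eventually_ge_atTop N]
      with n ⟨k, hnk, hkb, hck⟩ hNn
    refine ⟨k, by simpa using hkb, ?_⟩
    have hMk : M * n ≤ M * k := mul_le_mul_of_nonneg_left (by exact_mod_cast hnk) hM.le
    linarith [hN k (hNn.trans hnk)]
  have hunbdd : ∀ᶠ t in atTop, ∃ k, t < S k + Z k :=
    (eventually_exists_lt_apply_le (half_pos hm) zero_le_two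
      (hreach _ (half_pos hm) (half_lt_self hm) 2 one_lt_two)).mono fun t ⟨k, hk, _⟩ => ⟨k, hk⟩
  refine tendsto_order.2 ⟨fun a ha => ?_, fun a ha => ?_⟩
  · obtain ⟨a', ha', ha'm⟩ := exists_between (max_lt ha (one_div_pos.2 hm))
    have ha'0 : 0 < a' := (le_max_right _ _).trans_lt ha'
    have hmM : m < 1 / a' := (lt_one_div ha'0 hm).1 ha'm
    have hfM : ∀ᶠ k : ℕ in atTop, S k + Z k ≤ 1 / a' * k := by
      filter_upwards [eventually_le_mul_of_tendsto_div hS (left_lt_add_div_two.2 hmM),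
        hZ _ (half_pos (sub_pos.2 hmM))] with k hSk hZk
      linarith
    refine eventually_lt_firstPassage_div (one_div_pos.2 ha'0) ?_ hfM hunbdd
    rw [one_div_one_div]
    exact (le_max_left _ _).trans_lt ha'
  · have ha0 : 0 < a := (one_div_pos.2 hm).trans ha
    obtain ⟨M, haM, hMm⟩ := exists_between ((one_div_lt hm ha0).1 ha)
    have hM0 : 0 < M := (one_div_pos.2 ha0).trans haM
    obtain ⟨b, hb, hbM⟩ := exists_between ((div_lt_iff₀ ha0).1 haM)
    exact eventually_firstPassage_div_lt hM0 (zero_le_one.trans hb.le)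
      ((div_lt_iff₀ hM0).2 (by linarith)) (hreach M hM0 hMm b hb)

lemma summable_pow_floor_mul_add_one {r δ : ℝ} (hr0 : 0 ≤ r) (hr1 : r < 1) (hδ : 0 < δ) :
    Summable fun n : ℕ => r ^ (⌊δ * n⌋₊ + 1) := by
  refine (summable_geometric_of_lt_one (rpow_nonneg hr0 δ) (rpow_lt_one hr0 hr1 hδ)).of_nonneg_of_le
    (fun n => pow_nonneg hr0 _) fun n => ?_
  have hexp : δ * n ≤ ((⌊δ * n⌋₊ + 1 : ℕ) : ℝ) := by
    push_cast
    linarith [Nat.lt_floor_add_one (δ * n)]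
  calc r ^ (⌊δ * n⌋₊ + 1) = r ^ (((⌊δ * n⌋₊ + 1 : ℕ) : ℝ)) := (rpow_natCast r _).symm
    _ ≤ r ^ (δ * n) := rpow_le_rpow_of_exponent_ge' hr0 hr1.le (by positivity) hexp
    _ = (r ^ δ) ^ n := by rw [rpow_mul hr0, rpow_natCast]

section Probability

variable {Ω : Type*} [MeasurableSpace Ω] {μ : Measure Ω}

lemma ae_forall_pos_of_monotone {p : ℝ → Ω → Prop} (hp : ∀ ω, Monotone fun δ => p δ ω)
    (h : ∀ δ > 0, ∀ᵐ ω ∂μ, p δ ω) : ∀ᵐ ω ∂μ, ∀ δ > 0, p δ ω := by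
  filter_upwards [ae_all_iff.2 fun j : ℕ => h (1 / (j + 1)) Nat.one_div_pos_of_nat] with ω hω δ hδ
  obtain ⟨j, hj⟩ := exists_nat_one_div_lt hδ
  exact hp ω hj.le (hω j)

lemma exists_measure_preimage_Iio_lt [IsFiniteMeasure μ] {Y : Ω → ℝ} (hY : AEMeasurable Y μ)
    {ε : ℝ≥0∞} (hε : 0 < ε) : ∃ c : ℝ, μ (Y ⁻¹' Iio c) < ε := by
  have h := tendsto_measure_iInter_atBot (μ := μ) (s := fun c : ℝ => Y ⁻¹' Iio c)
    (fun c => hY.nullMeasurable measurableSet_Iio)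
    (fun a b hab => preimage_mono (Iio_subset_Iio hab)) ⟨0, measure_ne_top _ _⟩
  have hempty : ⋂ c : ℝ, Y ⁻¹' Iio c = ∅ :=
    eq_empty_of_forall_notMem fun ω hω => lt_irrefl (Y ω) (mem_iInter.1 hω (Y ω))
  rw [hempty, measure_empty] at h
  exact (h.eventually_lt_const hε).exists

lemma ae_forall_eventually_le_mul_of_identDistrib [IsProbabilityMeasure μ] {Y : ℕ → Ω → ℝ}
    (hY : ∀ n, IdentDistrib (Y n) (Y 0) μ μ) (hint : Integrable (fun ω => max (Y 0 ω) 0) μ) :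
    ∀ᵐ ω ∂μ, ∀ e > 0, ∀ᶠ n : ℕ in atTop, Y n ω ≤ e * n := by
  refine ae_forall_pos_of_monotone (fun ω e e' hee' h => h.mono fun n hn => ?_) fun e he => ?_
  · exact hn.trans (mul_le_mul_of_nonneg_right hee' n.cast_nonneg)
  have hg : Measurable fun x : ℝ => max x 0 / e := by fun_prop
  have hsum : (∑' n : ℕ, μ ((fun ω => max (Y n ω) 0 / e) ⁻¹' Ioi (n : ℝ))) ≠ ∞ := by
    let : MeasureSpace Ω := ⟨μ⟩
    refine ((tsum_congr fun n => ((hY n).comp hg).measure_mem_eq measurableSet_Ioi).trans_lt ?_).ne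
    exact tsum_prob_mem_Ioi_lt_top (hint.div_const e) fun ω => div_nonneg (le_max_right _ _) he.le
  filter_upwards [ae_eventually_notMem hsum] with ω hω
  filter_upwards [hω] with n hn
  simp only [mem_preimage, mem_Ioi, not_lt, div_le_iff₀ he] at hn
  linarith [le_max_left (Y n ω) 0]

lemma ae_forall_eventually_exists_notMem_of_iIndepFun {β : Type*} [MeasurableSpace β]
    {ξ : ℕ → Ω → β} (hξ : iIndepFun ξ μ) {s : Set β} (hs : MeasurableSet s) {q : ℝ≥0∞}
    (hq : ∀ k, μ (ξ k ⁻¹' s) ≤ q) (hq1 : q < 1) :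
    ∀ᵐ ω ∂μ, ∀ δ > 0, ∀ᶠ n : ℕ in atTop, ∃ k : ℕ, n ≤ k ∧ (k : ℝ) ≤ (1 + δ) * n ∧ ξ k ω ∉ s := by
  refine ae_forall_pos_of_monotone (fun ω δ δ' hδδ' h => h.mono fun n ⟨k, hnk, hkδ, hks⟩ =>
    ⟨k, hnk, hkδ.trans (by gcongr), hks⟩) fun δ hδ => ?_
  lift q to ℝ≥0 using hq1.ne_top
  have hwindow : ∀ n : ℕ, μ (⋂ k ∈ Finset.Icc n (n + ⌊δ * n⌋₊), ξ k ⁻¹' s)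
      ≤ ((q ^ (⌊δ * n⌋₊ + 1) : ℝ≥0) : ℝ≥0∞) := fun n => by
    rw [hξ.meas_biInter fun k _ => ⟨s, hs, rfl⟩, ENNReal.coe_pow]
    calc ∏ k ∈ Finset.Icc n (n + ⌊δ * n⌋₊), μ (ξ k ⁻¹' s)
        ≤ (q : ℝ≥0∞) ^ (Finset.Icc n (n + ⌊δ * n⌋₊)).card :=
          Finset.prod_le_pow_card _ _ _ fun k _ => hq k
      _ = (q : ℝ≥0∞) ^ (⌊δ * n⌋₊ + 1) := by rw [Nat.card_Icc, add_assoc, Nat.add_sub_cancel_left]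
  have hsummable : Summable fun n : ℕ => q ^ (⌊δ * n⌋₊ + 1) := by
    rw [← NNReal.summable_coe]
    push_cast
    exact summable_pow_floor_mul_add_one q.2 (by exact_mod_cast hq1) hδ
  have hsum := ne_top_of_le_ne_top (ENNReal.tsum_coe_ne_top_iff_summable.2 hsummable)
    (ENNReal.tsum_le_tsum hwindow)
  filter_upwards [ae_eventually_notMem hsum] with ω hω
  filter_upwards [hω] with n hn
  simp only [mem_iInter, mem_preimage, not_forall, Finset.mem_Icc] at hn
  obtain ⟨k, ⟨hnk, hkn⟩, hks⟩ := hn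
  refine ⟨k, hnk, ?_, hks⟩
  have hk : (k : ℝ) ≤ n + ⌊δ * n⌋₊ := by exact_mod_cast hkn
  linarith [Nat.floor_le (by positivity : 0 ≤ δ * n)]

end Probability

theorem stmt11_general {Ω : Type*} [MeasurableSpace Ω] (μ : Measure Ω) [IsProbabilityMeasure μ]
    (X : ℕ → Ω → ℝ) (ξ : ℕ → Ω → ℝ) (m : ℝ)
    (hXindep : iIndepFun X μ)
    (hXid : ∀ i, IdentDistrib (X i) (X 0) μ μ)
    (hXint : Integrable (X 0) μ) (hmean : ∫ ω, X 0 ω ∂μ = m) (hm : 0 < m)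
    (hξindep : iIndepFun ξ μ)
    (hξid : ∀ i, IdentDistrib (ξ i) (ξ 0) μ μ)
    (hξint : Integrable (fun ω => max (ξ 0 ω) 0) μ) :
    ∀ᵐ ω ∂μ, Tendsto
      (fun t : ℝ =>
        ((sInf {k : ℕ | t < (∑ i ∈ Finset.range k, X i ω) + ξ k ω} : ℕ) : ℝ) / t)
      atTop (nhds (1 / m)) := by
  have hV := strong_law_ae_real X hXint (fun i j hij => hXindep.indepFun hij) hXid
  rw [hmean] at hV
  have hξ_sublinear := ae_forall_eventually_le_mul_of_identDistrib hξid hξint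
  obtain ⟨c, hc⟩ := exists_measure_preimage_Iio_lt (hξid 0).aemeasurable_fst one_pos
  have hξ_windows := ae_forall_eventually_exists_notMem_of_iIndepFun hξindep measurableSet_Iio
    (fun k => ((hξid k).measure_mem_eq measurableSet_Iio).le) hc
  filter_upwards [hV, hξ_sublinear, hξ_windows] with ω hωV hωξ hωW
  exact tendsto_firstPassage_div hm hωV hωξ fun δ hδ =>
    (hωW δ hδ).mono fun n ⟨k, hnk, hkδ, hk⟩ => ⟨k, hnk, hkδ, not_lt.1 hk⟩

/-- First-passage asymptotics: if `V_n` is a random walk with i.i.d. increments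
of mean `μ ∈ (0,∞)` and `(ξ_n)` are i.i.d. perturbations with `E[ξ_0^+] < ∞`,
then `τ(t)/t → 1/μ` a.s. as `t → ∞`, where
`τ(t) = inf{k : V_k + ξ_k > t}`. -/
theorem stmt11 {Ω : Type*} [MeasurableSpace Ω] (μ : Measure Ω) [IsProbabilityMeasure μ]
    (X : ℕ → Ω → ℝ) (ξ : ℕ → Ω → ℝ) (m : ℝ)
    (hXmeas : ∀ i, Measurable (X i))
    (hXindep : iIndepFun X μ)
    (hXid : ∀ i, IdentDistrib (X i) (X 0) μ μ)
    (hXint : Integrable (X 0) μ) (hmean : ∫ ω, X 0 ω ∂μ = m) (hm : 0 < m)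
    (hξmeas : ∀ i, Measurable (ξ i))
    (hξindep : iIndepFun ξ μ)
    (hξid : ∀ i, IdentDistrib (ξ i) (ξ 0) μ μ)
    (hξint : Integrable (fun ω => max (ξ 0 ω) 0) μ) :
    ∀ᵐ ω ∂μ, Tendsto
      (fun t : ℝ =>
        ((sInf {k : ℕ | t < (∑ i ∈ Finset.range k, X i ω) + ξ k ω} : ℕ) : ℝ) / t)
      atTop (nhds (1 / m)) :=
  stmt11_general μ X ξ m hXindep hXid hXint hmean hm hξindep hξid hξint
end
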